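/- Let k be a field of characteristic p and I ⊂ D a homogeneous ideal generated in degrees ≤ d. Then the maximal degree occurring in Tor_1^D(k, I) is at most d − 1 + p^{ℓ(d)+1}, where ℓ(d) is the least r ≥ 0 with d ≤ p^r. -/

import Mathlib

noncomputable def ellD (p : ℕ) (z : ℤ) : ℕ := sInf {r : ℕ | z ≤ (p : ℤ) ^ r}

/-!
Let `q = p ^ (ℓ(d) + 1) > d` and write `eᵢ` for the generators of `F = ι →₀ D`. As `φ` is graded,
its kernel is spanned by homogeneous kernel elements `∑ μᵢ eᵢ B_{N - deg eᵢ}`. By Lucas' theorem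
`C(n, n mod q) ≡ 1 (mod p)`, so `eᵢ B_n = B_{n - n mod q} • eᵢ B_{n mod q}`, and the weight
`cᵢ C(n + deg eᵢ, n)` of `eᵢ B_n` under `φ` only depends on `n mod q`. A term of weight zero is
therefore a multiple of the kernel element `eᵢ B_{n mod q}`, of degree `< q + d`. A term of nonzero
weight adds `deg eᵢ` to `n mod q` without carry, so all these terms are `B_{N - N mod q}` times a
single kernel element of degree `N mod q < q`.
-/

open Module Finsupp

theorem Choose.choose_modEq_choose_mod_pow_nat {p : ℕ} (hp : p.Prime) :
    ∀ {a n e : ℕ}, e < p ^ a → n.choose e ≡ (n % p ^ a).choose e [MOD p]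
  | 0, n, e, he => by
    obtain rfl : e = 0 := by simpa using he
    simp [Nat.ModEq.refl]
  | a + 1, n, e, he => by
    have := Fact.mk hp
    have hdiv : e / p < p ^ a := (Nat.div_lt_iff_lt_mul hp.pos).mpr (by rwa [← pow_succ])
    have hmod : n % p ^ (a + 1) % p = n % p :=
      Nat.mod_mod_of_dvd n (dvd_pow_self p a.succ_ne_zero)
    have hquot : n % p ^ (a + 1) / p = n / p % p ^ a := by
      rw [pow_succ', Nat.mod_mul_right_div_self]
    calc n.choose e ≡ (n % p).choose (e % p) * (n / p).choose (e / p) [MOD p] :=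
          Choose.choose_modEq_choose_mod_mul_choose_div_nat
      _ ≡ (n % p).choose (e % p) * (n / p % p ^ a).choose (e / p) [MOD p] :=
          (Choose.choose_modEq_choose_mod_pow_nat hp hdiv).mul_left _
      _ ≡ (n % p ^ (a + 1)).choose e [MOD p] := by
          rw [← hmod, ← hquot]
          exact Choose.choose_modEq_choose_mod_mul_choose_div_nat.symm

section CharP

variable {k : Type*} [Ring k] {p : ℕ} [CharP k p]

theorem natCast_choose_eq_natCast_choose_mod_pow (hp : p.Prime) {a e : ℕ} (he : e < p ^ a)
    (n : ℕ) : (n.choose e : k) = ((n % p ^ a).choose e : k) :=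
  (CharP.natCast_eq_natCast k p).mpr (Choose.choose_modEq_choose_mod_pow_nat hp he)

theorem natCast_choose_mod_pow_eq_one (hp : p.Prime) (a n : ℕ) :
    (n.choose (n % p ^ a) : k) = 1 := by
  have hlt : n % p ^ a < p ^ a := Nat.mod_lt n (pow_pos hp.pos a)
  rw [natCast_choose_eq_natCast_choose_mod_pow hp hlt, Nat.choose_self, Nat.cast_one]

theorem natCast_choose_add_eq_natCast_choose_mod_pow_add (hp : p.Prime) {a e : ℕ}
    (he : e < p ^ a) (n : ℕ) :
    ((n + e).choose n : k) = ((n % p ^ a + e).choose (n % p ^ a) : k) := by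
  rw [Nat.choose_symm_add, Nat.choose_symm_add, natCast_choose_eq_natCast_choose_mod_pow hp he,
    natCast_choose_eq_natCast_choose_mod_pow hp he (n % p ^ a + e), Nat.mod_add_mod]

theorem mod_pow_add_eq_of_natCast_choose_ne_zero (hp : p.Prime) {a e : ℕ} (he : e < p ^ a)
    {n : ℕ} (hne : ((n + e).choose n : k) ≠ 0) : n % p ^ a + e = (n + e) % p ^ a := by
  rw [Nat.choose_symm_add, natCast_choose_eq_natCast_choose_mod_pow hp he] at hne
  have hle : e ≤ (n + e) % p ^ a := by
    by_contra h
    exact hne (by rw [Nat.choose_eq_zero_of_lt (not_le.mp h), Nat.cast_zero])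
  have hlt : n % p ^ a < p ^ a := Nat.mod_lt n (pow_pos hp.pos a)
  rw [← Nat.mod_add_mod] at hle ⊢
  rcases lt_or_ge (n % p ^ a + e) (p ^ a) with h | h
  · exact (Nat.mod_eq_of_lt h).symm
  · rw [Nat.mod_eq_sub_mod h, Nat.mod_eq_of_lt (by omega)] at hle
    omega

end CharP

theorem LinearMap.ker_le_of_homogeneous_mem {R κ V W : Type*} [Semiring R] [AddCommMonoid V]
    [Module R V] [AddCommMonoid W] [Module R W] (b : Basis κ R V) (B : Basis ℕ R W)
    (deg : κ → ℕ) (w : κ → R) (f : V →ₗ[R] W) (hf : ∀ a, f (b a) = w a • B (deg a))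
    (S : Submodule R V)
    (hS : ∀ (N : ℕ) (s : Finset κ) (c : κ → R), (∀ a ∈ s, deg a = N) →
      ∑ a ∈ s, c a * w a = 0 → ∑ a ∈ s, c a • b a ∈ S) :
    LinearMap.ker f ≤ S := by
  classical
  intro x hx
  set t := (b.repr x).support
  have hcoeff : ∀ N, ∑ a ∈ t with deg a = N, b.repr x a * w a = 0 := by
    intro N
    have hfx : f x = ∑ a ∈ t, (b.repr x a * w a) • B (deg a) := by
      conv_lhs => rw [← b.linearCombination_repr x]
      simp only [linearCombination_apply, Finsupp.sum, map_sum, map_smul, hf, smul_smul, t]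
    have := congrArg (fun y => B.repr y N) hfx
    simpa +contextual [Finset.sum_filter, LinearMap.mem_ker.mp hx, Finsupp.single_apply]
      using this.symm
  rw [← b.linearCombination_repr x, linearCombination_apply, Finsupp.sum,
    ← Finset.sum_fiberwise_of_maps_to (fun a ha => Finset.mem_image_of_mem deg ha)]
  exact S.sum_mem fun N _ => hS N _ _ (fun a ha => (Finset.mem_filter.mp ha).2) (hcoeff N)

section DividedPowerBasis

variable {k D ι : Type*} [CommRing k] [CommRing D] [Algebra k D]

def kerOfDegreeLE (φ : (ι →₀ D) →ₗ[D] D) (B : Basis ℕ k D) (e : ι → ℕ) (M : ℕ) :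
    Set (ι →₀ D) :=
  {x | x ∈ LinearMap.ker φ ∧ ∀ i n, B.repr (x i) n ≠ 0 → n + e i ≤ M}

def IsDividedPowerBasis (B : Basis ℕ k D) : Prop :=
  ∀ n m : ℕ, B n * B m = ((n + m).choose n : k) • B (n + m)

variable {B : Basis ℕ k D}

theorem smul_single_basis (hmul : IsDividedPowerBasis B) (i : ι) (m n : ℕ) :
    B m • single i (B n) = ((m + n).choose m : k) • single i (B (m + n)) := by
  rw [smul_single, smul_eq_mul, hmul m n, smul_single]

theorem single_basis_eq_smul_single_mod_pow {p : ℕ} [CharP k p] (hp : p.Prime)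
    (hmul : IsDividedPowerBasis B) (a : ℕ) (i : ι) (n : ℕ) :
    single i (B n) = B (n - n % p ^ a) • single i (B (n % p ^ a)) := by
  rw [smul_single_basis hmul, Nat.sub_add_cancel (Nat.mod_le n _),
    Nat.choose_symm (Nat.mod_le n _), natCast_choose_mod_pow_eq_one hp, one_smul]

theorem map_single_basis (hmul : IsDividedPowerBasis B)
    {φ : (ι →₀ D) →ₗ[D] D} {i : ι} {c : k} {e : ℕ} (hφ : φ (single i 1) = c • B e) (n : ℕ) :
    φ (single i (B n)) = (c * ((n + e).choose n : k)) • B (n + e) := by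
  have hsingle : single i (B n) = B n • single i (1 : D) := by
    rw [smul_single, smul_eq_mul, mul_one]
  rw [hsingle, map_smul, hφ, smul_comm, smul_eq_mul, hmul n e, smul_smul]

variable {φ : (ι →₀ D) →ₗ[D] D} {e : ι → ℕ} {M : ℕ}

theorem sum_smul_single_mem_kerOfDegreeLE {α : Type*} (s : Finset α) (μ : α → k) (j : α → ι)
    (m : α → ℕ) (hker : φ (∑ a ∈ s, μ a • single (j a) (B (m a))) = 0)
    (hdeg : ∀ a ∈ s, m a + e (j a) ≤ M) :
    ∑ a ∈ s, μ a • single (j a) (B (m a)) ∈ kerOfDegreeLE φ B e M := by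
  classical
  refine ⟨hker, fun i n hn => ?_⟩
  simp only [Finsupp.finsetSum_apply, Finsupp.smul_apply, map_sum, map_smul, single_apply] at hn
  obtain ⟨a, ha, hne⟩ := Finset.exists_ne_zero_of_sum_ne_zero hn
  have hj : j a = i := by
    by_contra h
    simp [h] at hne
  have hm : m a = n := by
    by_contra h
    simp [hj, h] at hne
  exact hj ▸ hm ▸ hdeg a ha

theorem single_mem_kerOfDegreeLE {i : ι} {n : ℕ} (hker : φ (single i (B n)) = 0)
    (hdeg : n + e i ≤ M) : single i (B n) ∈ kerOfDegreeLE φ B e M := by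
  simpa using sum_smul_single_mem_kerOfDegreeLE (e := e) {()} (fun _ => (1 : k)) (fun _ => i)
    (fun _ => n) (by simpa using hker) (by simpa using hdeg)

variable {p : ℕ} [CharP k p] {c : ι → k} {d r : ℕ}

theorem single_mem_span_kerOfDegreeLE_of_weight_eq_zero (hp : p.Prime)
    (hmul : IsDividedPowerBasis B)
    (hφ : ∀ i, φ (single i 1) = c i • B (e i)) (hd : d < p ^ r) (he : ∀ i, e i ≤ d)
    {i : ι} {n : ℕ} (hw : c i * ((n + e i).choose n : k) = 0) :
    single i (B n) ∈ Submodule.span D (kerOfDegreeLE φ B e (d + p ^ r - 1)) := by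
  rw [single_basis_eq_smul_single_mod_pow hp hmul r]
  refine Submodule.smul_mem _ _ (Submodule.subset_span (single_mem_kerOfDegreeLE ?_ ?_))
  · rw [map_single_basis hmul (hφ i),
      ← natCast_choose_add_eq_natCast_choose_mod_pow_add hp ((he i).trans_lt hd), hw, zero_smul]
  · have := Nat.mod_lt n (pow_pos hp.pos r)
    have := he i
    omega

theorem sum_mem_span_kerOfDegreeLE_of_homogeneous (hp : p.Prime)
    (hmul : IsDividedPowerBasis B)
    (hφ : ∀ i, φ (single i 1) = c i • B (e i)) (hd : d < p ^ r) (he : ∀ i, e i ≤ d)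
    {N : ℕ} (s : Finset (Σ _ : ι, ℕ)) (hs : ∀ a ∈ s, a.2 + e a.1 = N) (μ : (Σ _ : ι, ℕ) → k)
    (hμ : ∑ a ∈ s, μ a * (c a.1 * ((a.2 + e a.1).choose a.2 : k)) = 0) :
    ∑ a ∈ s, μ a • single a.1 (B a.2) ∈
      Submodule.span D (kerOfDegreeLE φ B e (d + p ^ r - 1)) := by
  classical
  set w : (Σ _ : ι, ℕ) → k := fun a => c a.1 * ((a.2 + e a.1).choose a.2 : k)
  rw [← Finset.sum_filter_add_sum_filter_not s (fun a => w a = 0)]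
  refine add_mem (Submodule.sum_mem _ fun a ha => Submodule.smul_of_tower_mem _ _
    (single_mem_span_kerOfDegreeLE_of_weight_eq_zero hp hmul hφ hd he
      (Finset.mem_filter.mp ha).2)) ?_
  have hcarry : ∀ a ∈ s, w a ≠ 0 → a.2 % p ^ r + e a.1 = N % p ^ r := by
    intro a has hwa
    rw [← hs a has]
    exact mod_pow_add_eq_of_natCast_choose_ne_zero hp ((he a.1).trans_lt hd)
      (right_ne_zero_of_mul hwa)
  have hlift : ∑ a ∈ s with ¬ w a = 0, μ a • single a.1 (B a.2) =
      B (N - N % p ^ r) • ∑ a ∈ s with ¬ w a = 0, μ a • single a.1 (B (a.2 % p ^ r)) := by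
    rw [Finset.smul_sum]
    refine Finset.sum_congr rfl fun a ha => ?_
    obtain ⟨has, hwa⟩ := Finset.mem_filter.mp ha
    have := hcarry a has hwa
    have := hs a has
    rw [single_basis_eq_smul_single_mod_pow hp hmul r a.1 a.2, smul_comm,
      show a.2 - a.2 % p ^ r = N - N % p ^ r by omega]
  rw [hlift]
  refine Submodule.smul_mem _ _ (Submodule.subset_span
    (sum_smul_single_mem_kerOfDegreeLE _ _ _ _ ?_ fun a ha => ?_))
  · calc φ (∑ a ∈ s with ¬ w a = 0, μ a • single a.1 (B (a.2 % p ^ r)))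
        = ∑ a ∈ s with ¬ w a = 0, (μ a * w a) • B (N % p ^ r) := by
          rw [map_sum]
          refine Finset.sum_congr rfl fun a ha => ?_
          rw [LinearMap.map_smul_of_tower, map_single_basis hmul (hφ a.1),
            ← natCast_choose_add_eq_natCast_choose_mod_pow_add hp ((he a.1).trans_lt hd),
            hcarry a (Finset.mem_filter.mp ha).1 (Finset.mem_filter.mp ha).2, smul_smul]
      _ = 0 := by
          rw [← Finset.sum_smul, Finset.sum_filter_of_ne fun a _ h => right_ne_zero_of_mul h, hμ,
            zero_smul]
  · have := Nat.mod_lt N (pow_pos hp.pos r)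
    rw [hcarry a (Finset.mem_filter.mp ha).1 (Finset.mem_filter.mp ha).2]
    omega

end DividedPowerBasis

theorem natCast_le_pow_ellD {p : ℕ} (hp : 1 < p) (d : ℕ) : (d : ℤ) ≤ (p : ℤ) ^ ellD p d :=
  Nat.sInf_mem (s := {r : ℕ | (d : ℤ) ≤ (p : ℤ) ^ r}) ⟨d, by exact_mod_cast (Nat.lt_pow_self hp).le⟩

theorem stmt16_general (p : ℕ) (hp : p.Prime) (k D : Type*) [Field k] [CharP k p]
    [CommRing D] [Algebra k D]
    (B : Module.Basis ℕ k D)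
    (hmul : ∀ n m : ℕ, B n * B m = ((n + m).choose n : k) • B (n + m))
    (d : ℕ)
    (ι : Type*) (degF : ι → ℕ) (hdegF : ∀ i, degF i ≤ d)
    (φ : (ι →₀ D) →ₗ[D] D)
    (hφhom : ∀ i : ι, ∃ c : k, φ (Finsupp.single i 1) = c • B (degF i)) :
    LinearMap.ker φ = Submodule.span D
      {x : ι →₀ D | x ∈ LinearMap.ker φ ∧ ∀ (i : ι) (n : ℕ), B.repr (x i) n ≠ 0 →
        (n : ℤ) + degF i ≤ (d : ℤ) - 1 + (p : ℤ) ^ (ellD p (d : ℤ) + 1)} := by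
  choose c hc using hφhom
  set r := ellD p (d : ℤ) + 1
  have hq : ((p ^ r : ℕ) : ℤ) = (p : ℤ) ^ r := Nat.cast_pow p r
  have hd : d < p ^ r := by
    have h1 := natCast_le_pow_ellD hp.one_lt d
    have h2 : p ^ ellD p d < p ^ r := Nat.pow_lt_pow_succ hp.one_lt
    zify at h2
    omega
  have hgen : {x : ι →₀ D | x ∈ LinearMap.ker φ ∧ ∀ (i : ι) (n : ℕ), B.repr (x i) n ≠ 0 →
      (n : ℤ) + degF i ≤ (d : ℤ) - 1 + (p : ℤ) ^ r} = kerOfDegreeLE φ B degF (d + p ^ r - 1) := by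
    ext x
    refine and_congr_right fun _ => forall₂_congr fun i n => imp_congr_right fun _ => ?_
    omega
  rw [hgen]
  refine le_antisymm (fun x hx => ?_) (Submodule.span_le.mpr fun x hx => hx.1)
  exact LinearMap.ker_le_of_homogeneous_mem (Finsupp.basis fun _ => B) B (fun a => a.2 + degF a.1)
    (fun a => c a.1 * ((a.2 + degF a.1).choose a.2 : k)) (φ.restrictScalars k)
    (fun a => by simpa using map_single_basis hmul (hc a.1) a.2)
    ((Submodule.span D _).restrictScalars k)
    (fun N s μ hs hμ => by
      simpa using sum_mem_span_kerOfDegreeLE_of_homogeneous hp hmul hc hd hdegF s hs μ hμ) hx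

/-- Let `I ⊂ D` be a homogeneous ideal generated in degrees `≤ d`, over a field of
characteristic `p`. Then `maxdeg Tor₁^D(k, I) ≤ d - 1 + p^{ℓ(d)+1}`: concretely, for any
graded free cover `φ : F → I` with generators in degrees `≤ d`, the kernel of `φ` (whose
generating degrees compute `Tor₁`) is generated by elements of degree
`≤ d - 1 + p^{ℓ(d)+1}`. -/
theorem stmt16 (p : ℕ) (hp : p.Prime) (k D : Type*) [Field k] [CharP k p]
    [CommRing D] [Algebra k D]
    (B : Module.Basis ℕ k D) (hone : B 0 = 1)
    (hmul : ∀ n m : ℕ, B n * B m = ((n + m).choose n : k) • B (n + m))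
    (d : ℕ) (I : Ideal D)
    (hI : ∃ T : Set ℕ, (∀ n ∈ T, n ≤ d) ∧ I = Ideal.span (B '' T))
    (ι : Type*) [Fintype ι] (degF : ι → ℕ) (hdegF : ∀ i, degF i ≤ d)
    (φ : (ι →₀ D) →ₗ[D] D)
    (hφhom : ∀ i : ι, ∃ c : k, φ (Finsupp.single i 1) = c • B (degF i))
    (hφrange : LinearMap.range φ = I) :
    LinearMap.ker φ = Submodule.span D
      {x : ι →₀ D | x ∈ LinearMap.ker φ ∧ ∀ (i : ι) (n : ℕ), B.repr (x i) n ≠ 0 →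
        (n : ℤ) + degF i ≤ (d : ℤ) - 1 + (p : ℤ) ^ (ellD p (d : ℤ) + 1)} :=
  stmt16_general p hp k D B hmul d ι degF hdegF φ hφhom
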